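/- arXiv:2605.22669 — 3 statements merged into one kernel-verified Lean document; each statement's English description precedes it below -/
import Mathlib

section
/- Let G be a finite group, x ∈ G a p-element, and Q ≤ G a p-subgroup containing x. Then the normalizer N_G(Q) is contained in Sub_G(x). -/
/-- `H` is a normal subgroup of `K` (in particular `H ≤ K`). -/
def normalIn {G : Type*} [Group G] (H K : Subgroup G) : Prop :=
  H ≤ K ∧ ∀ k ∈ K, ∀ h ∈ H, k * h * k⁻¹ ∈ H

/-- `H` is subnormal in `K`: there is a chain `H = H₀ ⊴ H₁ ⊴ ⋯ ⊴ Hₙ = K`. -/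
def subnormalIn {G : Type*} [Group G] (H K : Subgroup G) : Prop :=
  ∃ n : ℕ, ∃ f : Fin (n + 1) → Subgroup G,
    f 0 = H ∧ f (Fin.last n) = K ∧ ∀ i : Fin n, normalIn (f i.castSucc) (f i.succ)

/-- The subnormalizer subset `S_G(x) = {y ∈ G : ⟨x⟩ is subnormal in ⟨x, y⟩}`. -/
def subnSet {G : Type*} [Group G] (x : G) : Set G :=
  {y | subnormalIn (Subgroup.zpowers x) (Subgroup.closure {x, y})}

/-- The subnormalizer `Sub_G(x) = ⟨S_G(x)⟩`. -/
def SubG {G : Type*} [Group G] (x : G) : Subgroup G :=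
  Subgroup.closure (subnSet x)

/-!
If `y` normalizes `Q`, so does `M = ⟨x, y⟩` (as `x ∈ Q`), hence `Q ⊓ M ⊴ M`. Now `Q ⊓ M` is a
finite `p`-group containing `x`, hence nilpotent and so satisfies the normalizer condition;
climbing through iterated normalizers shows `⟨x⟩` is subnormal in `Q ⊓ M`, hence in `M`.
-/

section

open Subgroup

variable {G : Type*} [Group G]

theorem normalIn_of_le_normalizer {H K : Subgroup G} (hHK : H ≤ K)
    (hK : K ≤ normalizer (H : Set G)) : normalIn H K :=
  ⟨hHK, fun _ hk h hh => (mem_normalizer_iff.mp (hK hk) h).mp hh⟩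

theorem normalIn_inf_of_le_normalizer {Q M : Subgroup G} (hM : M ≤ normalizer (Q : Set G)) :
    normalIn (Q ⊓ M) M :=
  normalIn_of_le_normalizer inf_le_right
    ((le_inf hM M.le_normalizer).trans inf_normalizer_le_normalizer_inf)

theorem normalIn_map {G' : Type*} [Group G'] (φ : G →* G') {A B : Subgroup G}
    (h : normalIn A B) : normalIn (A.map φ) (B.map φ) := by
  refine ⟨map_mono h.1, ?_⟩
  rintro _ ⟨b, hb, rfl⟩ _ ⟨a, ha, rfl⟩
  exact ⟨b * a * b⁻¹, h.2 b hb a ha, by simp [mul_assoc]⟩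

theorem subnormalIn_refl (H : Subgroup G) : subnormalIn H H :=
  ⟨0, fun _ => H, rfl, rfl, fun i => i.elim0⟩

theorem subnormalIn_cons {H N K : Subgroup G} (h₁ : normalIn H N) (h₂ : subnormalIn N K) :
    subnormalIn H K := by
  obtain ⟨n, f, hf0, hfl, hf⟩ := h₂
  refine ⟨n + 1, Fin.cons H f, Fin.cons_zero _ _, ?_, ?_⟩
  · rw [← Fin.succ_last, Fin.cons_succ, hfl]
  · refine Fin.cases ?_ fun j => ?_
    · rw [Fin.castSucc_zero, Fin.cons_zero, Fin.cons_succ, hf0]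
      exact h₁
    · rw [← Fin.succ_castSucc, Fin.cons_succ, Fin.cons_succ]
      exact hf j

theorem subnormalIn_snoc {H K L : Subgroup G} (h₁ : subnormalIn H K) (h₂ : normalIn K L) :
    subnormalIn H L := by
  obtain ⟨n, f, hf0, hfl, hf⟩ := h₁
  refine ⟨n + 1, Fin.snoc f L, ?_, Fin.snoc_last _ _, ?_⟩
  · rw [← Fin.castSucc_zero, Fin.snoc_castSucc, hf0]
  · refine Fin.lastCases ?_ fun j => ?_
    · rw [Fin.snoc_castSucc, hfl, Fin.succ_last, Fin.snoc_last]
      exact h₂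
    · rw [Fin.snoc_castSucc, Fin.succ_castSucc, Fin.snoc_castSucc]
      exact hf j

theorem subnormalIn_map {G' : Type*} [Group G'] (φ : G →* G') {A B : Subgroup G}
    (h : subnormalIn A B) : subnormalIn (A.map φ) (B.map φ) := by
  obtain ⟨n, f, hf0, hfl, hf⟩ := h
  exact ⟨n, fun i => (f i).map φ, congrArg (map φ) hf0, congrArg (map φ) hfl,
    fun i => normalIn_map φ (hf i)⟩

theorem subnormalIn_top_of_normalizerCondition [Finite G] (hnc : NormalizerCondition G)
    (H : Subgroup G) : subnormalIn H ⊤ := by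
  induction H using WellFoundedGT.induction with
  | _ H ih =>
    rcases eq_or_ne H ⊤ with rfl | hH
    · exact subnormalIn_refl _
    · exact subnormalIn_cons (normalIn_of_le_normalizer le_normalizer le_rfl)
        (ih _ (hnc H hH.lt_top))

theorem subnormalIn_of_le_of_isNilpotent {H K : Subgroup G} [Finite K] [Group.IsNilpotent K]
    (hHK : H ≤ K) : subnormalIn H K := by
  have h := subnormalIn_map K.subtype <|
    subnormalIn_top_of_normalizerCondition Group.normalizerCondition_of_isNilpotent
      (H.subgroupOf K)
  rwa [subgroupOf_map_subtype, inf_eq_left.2 hHK, ← MonoidHom.range_eq_map,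
    range_subtype] at h

end

theorem stmt_1_general {G : Type*} [Group G] [Finite G] (p : ℕ) (hp : p.Prime) (x : G)
    (Q : Subgroup G) (hQ : IsPGroup p ↥Q)
    (hxQ : x ∈ Q) :
    Subgroup.normalizer (Q : Set G) ≤ SubG x := by
  intro y hy
  apply Subgroup.subset_closure
  set M := Subgroup.closure {x, y}
  show subnormalIn (Subgroup.zpowers x) M
  have hxM : Subgroup.zpowers x ≤ M :=
    Subgroup.zpowers_le.2 (Subgroup.subset_closure (Set.mem_insert _ _))
  have hM : M ≤ Subgroup.normalizer (Q : Set G) := by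
    rw [Subgroup.closure_le]
    rintro z (rfl | rfl)
    exacts [Subgroup.le_normalizer hxQ, hy]
  have : Fact p.Prime := ⟨hp⟩
  have : Group.IsNilpotent ↥(Q ⊓ M) := (hQ.to_le inf_le_left).isNilpotent
  exact subnormalIn_snoc
    (subnormalIn_of_le_of_isNilpotent (le_inf (Subgroup.zpowers_le.2 hxQ) hxM))
    (normalIn_inf_of_le_normalizer hM)

theorem stmt_1 {G : Type*} [Group G] [Finite G] (p : ℕ) (hp : p.Prime) (x : G)
    (hx : ∃ n : ℕ, orderOf x = p ^ n) (Q : Subgroup G) (hQ : IsPGroup p ↥Q)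
    (hxQ : x ∈ Q) :
    Subgroup.normalizer (Q : Set G) ≤ SubG x :=
  stmt_1_general p hp x Q hQ hxQ
end

section
/- Let G be a finite group, x ∈ G a p-element, and H ≤ G a subgroup containing x. If ⟨x⟩ is subnormal in Sub_G(x), then Sub_H(x) = Sub_G(x) ∩ H. -/
/-- The subnormalizer subset of `x` relative to the subgroup `H`:
`S_H(x) = {y ∈ H : ⟨x⟩ is subnormal in ⟨x, y⟩}`. -/
def subnSetIn {G : Type*} [Group G] (H : Subgroup G) (x : G) : Set G :=
  {y | y ∈ H ∧ subnormalIn (Subgroup.zpowers x) (Subgroup.closure {x, y})}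

/-- The subnormalizer of `x` relative to the subgroup `H`, `Sub_H(x) = ⟨S_H(x)⟩`. -/
def SubIn {G : Type*} [Group G] (H : Subgroup G) (x : G) : Subgroup G :=
  Subgroup.closure (subnSetIn H x)

lemma subnormalIn_refl_s3 {G : Type*} [Group G] (K : Subgroup G) : subnormalIn K K :=
  ⟨0, fun _ => K, rfl, rfl, fun i => i.elim0⟩

lemma subnormalIn_inf {G : Type*} [Group G] {A B M : Subgroup G}
    (hAM : A ≤ M) (hMB : M ≤ B) (h : subnormalIn A B) : subnormalIn A M := by
  obtain ⟨n, f, h0, hl, hn⟩ := h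
  refine ⟨n, fun i => f i ⊓ M, by show f 0 ⊓ M = A; rw [h0]; exact inf_eq_left.mpr hAM,
    by show f (Fin.last n) ⊓ M = M; rw [hl]; exact inf_eq_right.mpr hMB, fun i => ?_⟩
  refine ⟨inf_le_inf_right M (hn i).1, fun k hk h hh => ?_⟩
  exact ⟨(hn i).2 k hk.1 h hh.1, M.mul_mem (M.mul_mem hk.2 hh.2) (M.inv_mem hk.2)⟩

lemma x_mem_subnSet {G : Type*} [Group G] (x : G) : x ∈ subnSet x := by
  show subnormalIn _ _
  rw [Set.pair_eq_singleton, ← Subgroup.zpowers_eq_closure]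
  exact subnormalIn_refl_s3 _

lemma mem_subnSet_of_mem_SubG {G : Type*} [Group G] {x y : G}
    (hsub : subnormalIn (Subgroup.zpowers x) (SubG x)) (hy : y ∈ SubG x) :
    y ∈ subnSet x := by
  refine subnormalIn_inf ?_ ?_ hsub
  · exact Subgroup.zpowers_le.mpr (Subgroup.subset_closure (Set.mem_insert _ _))
  · rw [Subgroup.closure_le]
    rintro z hz
    rcases hz with h | h <;> subst h
    · exact Subgroup.subset_closure (x_mem_subnSet _)
    · exact hy

theorem stmt_3 {G : Type*} [Group G] [Finite G] (p : ℕ) (hp : p.Prime) (x : G)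
    (hx : ∃ n : ℕ, orderOf x = p ^ n) (H : Subgroup G) (hxH : x ∈ H)
    (hsub : subnormalIn (Subgroup.zpowers x) (SubG x)) :
    SubIn H x = SubG x ⊓ H := by
  have hset : subnSetIn H x = ((SubG x ⊓ H : Subgroup G) : Set G) := by
    ext y
    constructor
    · rintro ⟨hyH, hs⟩
      exact ⟨Subgroup.subset_closure hs, hyH⟩
    · rintro ⟨hyS, hyH⟩
      exact ⟨hyH, mem_subnSet_of_mem_SubG hsub hyS⟩
  rw [SubIn, hset, Subgroup.closure_eq]
end

section
/- Let G be a finite p-solvable group and let x ∈ G be a p-element with ⟨x⟩ subnormal in Sub_G(x) and ⟨x⟩ not subnormal in G. Define L_0 = O^{p'}(G) and inductively K_i = O^p(L_{i-1}), L_i = O^{p'}(K_i). Then there exists an index j with L_j a p-group, L_j ≤ Sub_G(x), and G ≠ L_j·Sub_G(x); hence the index k = min{i ≥ 1 : G ≠ L_i·Sub_G(x)} is well defined. -/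
open scoped Pointwise

/-- `G` is `p`-solvable: it has a subnormal series in which each factor is either a
`p`-group (the index of one term in the next is a power of `p`) or a `p'`-group. -/
def IsPSolvable (p : ℕ) (G : Type*) [Group G] : Prop :=
  ∃ n : ℕ, ∃ f : Fin (n + 1) → Subgroup G, f 0 = ⊥ ∧ f (Fin.last n) = ⊤ ∧
    ∀ i : Fin n, normalIn (f i.castSucc) (f i.succ) ∧
      ((∃ e : ℕ, ((f i.castSucc).subgroupOf (f i.succ)).index = p ^ e) ∨
        ¬ p ∣ ((f i.castSucc).subgroupOf (f i.succ)).index)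

/-!
For a `p`-solvable group `G` the alternating series `L₀ = O^{p'}(G)`, `Kᵢ = O^p(Lᵢ₋₁)`,
`Lᵢ = O^{p'}(Kᵢ)` decreases strictly as long as it is nontrivial: a nontrivial subgroup `H`
of `G` has a proper normal subgroup of `p`-power or `p'`-index (cut the `p`-solvable series
of `G` down to `H`), so `O^p` or `O^{p'}` moves `H`. Hence some `Lⱼ` is trivial, and then
`Lⱼ · Sub_G(x) = Sub_G(x) ≠ G`, since `⟨x⟩` is subnormal in `Sub_G(x)` but not in `G`.
-/

section

variable {G : Type*} [Group G]

def HasPOrPCoprimeIndex (p : ℕ) (N H : Subgroup G) : Prop :=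
  (∃ e : ℕ, (N.subgroupOf H).index = p ^ e) ∨ ¬ p ∣ (N.subgroupOf H).index

lemma normalIn.normal_subgroupOf {A B : Subgroup G} (h : normalIn A B) :
    (A.subgroupOf B).Normal where
  conj_mem n hn g := by
    rw [Subgroup.mem_subgroupOf] at hn ⊢
    exact h.2 g g.2 n hn

lemma normalIn.inf_of_le {A B H : Subgroup G} (h : normalIn A B) (hH : H ≤ B) :
    normalIn (A ⊓ H) H :=
  ⟨inf_le_right, fun k hk n hn =>
    ⟨h.2 k (hH hk) n hn.1, H.mul_mem (H.mul_mem hk hn.2) (H.inv_mem hk)⟩⟩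

lemma normalIn.index_inf_subgroupOf_dvd {A B H : Subgroup G} (h : normalIn A B) (hH : H ≤ B) :
    ((A ⊓ H).subgroupOf H).index ∣ (A.subgroupOf B).index := by
  have := h.normal_subgroupOf
  rw [Subgroup.inf_subgroupOf_right, ← Subgroup.relIndex, ← Subgroup.relIndex_subgroupOf hH]
  exact Subgroup.relIndex_dvd_index_of_normal (A.subgroupOf B) (H.subgroupOf B)

lemma HasPOrPCoprimeIndex.of_index_dvd {p : ℕ} (hp : p.Prime) {N H N' H' : Subgroup G}
    (h : HasPOrPCoprimeIndex p N H)
    (hdvd : (N'.subgroupOf H').index ∣ (N.subgroupOf H).index) :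
    HasPOrPCoprimeIndex p N' H' := by
  rcases h with ⟨e, he⟩ | hcop
  · obtain ⟨e', -, he'⟩ := (Nat.dvd_prime_pow hp).mp (he ▸ hdvd)
    exact Or.inl ⟨e', he'⟩
  · exact Or.inr fun hdvd' => hcop (hdvd'.trans hdvd)

lemma IsPSolvable.exists_normalIn_ne {p : ℕ} (hp : p.Prime) (hsolv : IsPSolvable p G)
    {H : Subgroup G} (hH : H ≠ ⊥) :
    ∃ N : Subgroup G, N ≠ H ∧ normalIn N H ∧ HasPOrPCoprimeIndex p N H := by
  obtain ⟨n, f, hf0, hfn, hstep⟩ := hsolv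
  suffices ∀ i, H ≤ f i → ∃ N : Subgroup G, N ≠ H ∧ normalIn N H ∧ HasPOrPCoprimeIndex p N H
    from this (Fin.last n) (hfn ▸ le_top)
  intro i
  induction i using Fin.induction with
  | zero => exact fun hle => absurd (le_bot_iff.mp (hf0 ▸ hle)) hH
  | succ i ih =>
    intro hle
    by_cases hi : H ≤ f i.castSucc
    · exact ih hi
    · exact ⟨f i.castSucc ⊓ H, fun h => hi (h ▸ inf_le_left), (hstep i).1.inf_of_le hle,
        HasPOrPCoprimeIndex.of_index_dvd hp (hstep i).2
          ((hstep i).1.index_inf_subgroupOf_dvd hle)⟩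

/-- `O^{p'}(O^p(L)) < L`, where `K = O^p(L)` and `L' = O^{p'}(K)`. -/
lemma IsPSolvable.oPCoprime_oP_lt {p : ℕ} (hp : p.Prime) (hsolv : IsPSolvable p G)
    {L K L' : Subgroup G} (hL : L ≠ ⊥) (hKL : K ≤ L)
    (hK : ∀ M : Subgroup G, M ≤ L → normalIn M L →
      (∃ e : ℕ, (M.subgroupOf L).index = p ^ e) → K ≤ M)
    (hL'K : L' ≤ K)
    (hL' : ∀ M : Subgroup G, M ≤ K → normalIn M K → ¬ p ∣ (M.subgroupOf K).index → L' ≤ M) :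
    L' < L := by
  refine lt_of_le_of_ne (hL'K.trans hKL) fun hL'L => ?_
  have hKeq : K = L := le_antisymm hKL (hL'L ▸ hL'K)
  subst hKeq hL'L
  obtain ⟨N, hNne, hN, hindex⟩ := hsolv.exists_normalIn_ne hp hL
  rcases hindex with hpow | hcop
  · exact hNne (le_antisymm hN.1 (hK N hN.1 hN hpow))
  · exact hNne (le_antisymm hN.1 (hL' N hN.1 hN hcop))

end

lemma exists_eq_bot_of_lt_of_ne_bot {α : Type*} [PartialOrder α] [OrderBot α] [WellFoundedLT α]
    (f : ℕ → α) (hf : ∀ i, f i ≠ ⊥ → f (i + 1) < f i) : ∃ j, f j = ⊥ := by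
  by_contra! hne
  obtain ⟨n, hn⟩ := WellFounded.not_rel_apply_succ (r := (· < ·)) f
  exact hn (hf n (hne n))

theorem stmt_16_general {G : Type*} [Group G] [Finite G] (p : ℕ) (hp : p.Prime)
    (hsolv : IsPSolvable p G)
    (x : G)
    (hxsub : subnormalIn (Subgroup.zpowers x) (SubG x))
    (hxnotsub : ¬ subnormalIn (Subgroup.zpowers x) (⊤ : Subgroup G))
    (L K : ℕ → Subgroup G)
    -- `K (i+1) = O^p(L i)`: the smallest normal subgroup of `L i` with `p`-power quotient
    (hK : ∀ i : ℕ, K (i + 1) ≤ L i ∧ normalIn (K (i + 1)) (L i) ∧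
      (∃ e : ℕ, ((K (i + 1)).subgroupOf (L i)).index = p ^ e) ∧
      ∀ M : Subgroup G, M ≤ L i → normalIn M (L i) →
        (∃ e : ℕ, (M.subgroupOf (L i)).index = p ^ e) → K (i + 1) ≤ M)
    -- `L (i+1) = O^{p'}(K (i+1))`: the smallest normal subgroup of `K (i+1)` with `p'`-quotient
    (hLsucc : ∀ i : ℕ, L (i + 1) ≤ K (i + 1) ∧ normalIn (L (i + 1)) (K (i + 1)) ∧
      ¬ p ∣ ((L (i + 1)).subgroupOf (K (i + 1))).index ∧
      ∀ M : Subgroup G, M ≤ K (i + 1) → normalIn M (K (i + 1)) →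
        ¬ p ∣ (M.subgroupOf (K (i + 1))).index → L (i + 1) ≤ M) :
    (∃ j : ℕ, IsPGroup p ↥(L j) ∧ L j ≤ SubG x ∧
      ((L j : Set G) * (SubG x : Set G)) ≠ Set.univ) ∧
    ∃ k : ℕ, 0 < k ∧ ((L k : Set G) * (SubG x : Set G)) ≠ Set.univ ∧
      ∀ i : ℕ, 0 < i → i < k → ((L i : Set G) * (SubG x : Set G)) = Set.univ := by
  classical
  have hSub : SubG x ≠ ⊤ := fun h => hxnotsub (h ▸ hxsub)
  have hmul : ∀ m, L m = ⊥ → (L m : Set G) * (SubG x : Set G) ≠ Set.univ := fun m hm => by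
    simpa [hm, Subgroup.coe_eq_univ] using hSub
  obtain ⟨j, hj⟩ := exists_eq_bot_of_lt_of_ne_bot L fun i hi =>
    hsolv.oPCoprime_oP_lt hp hi (hK i).1 (hK i).2.2.2 (hLsucc i).1 (hLsucc i).2.2.2
  have hj1 : L (j + 1) = ⊥ := le_bot_iff.mp (hj ▸ (hLsucc j).1.trans (hK j).1)
  have hex : ∃ k, 0 < k ∧ (L k : Set G) * (SubG x : Set G) ≠ Set.univ :=
    ⟨j + 1, j.succ_pos, hmul _ hj1⟩
  refine ⟨⟨j, hj ▸ IsPGroup.of_bot, hj ▸ bot_le, hmul j hj⟩,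
    Nat.find hex, (Nat.find_spec hex).1, (Nat.find_spec hex).2, fun i hi hik => ?_⟩
  by_contra hne
  exact Nat.find_min hex hik ⟨hi, hne⟩

theorem stmt_16 {G : Type*} [Group G] [Finite G] (p : ℕ) (hp : p.Prime)
    (hsolv : IsPSolvable p G)
    (x : G) (hx : ∃ n : ℕ, orderOf x = p ^ n)
    (hxsub : subnormalIn (Subgroup.zpowers x) (SubG x))
    (hxnotsub : ¬ subnormalIn (Subgroup.zpowers x) (⊤ : Subgroup G))
    (L K : ℕ → Subgroup G)
    -- `L 0 = O^{p'}(G)`: the smallest normal subgroup with `p'`-quotient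
    (hL0 : (L 0).Normal ∧ ¬ p ∣ (L 0).index ∧
      ∀ M : Subgroup G, M.Normal → ¬ p ∣ M.index → L 0 ≤ M)
    -- `K (i+1) = O^p(L i)`: the smallest normal subgroup of `L i` with `p`-power quotient
    (hK : ∀ i : ℕ, K (i + 1) ≤ L i ∧ normalIn (K (i + 1)) (L i) ∧
      (∃ e : ℕ, ((K (i + 1)).subgroupOf (L i)).index = p ^ e) ∧
      ∀ M : Subgroup G, M ≤ L i → normalIn M (L i) →
        (∃ e : ℕ, (M.subgroupOf (L i)).index = p ^ e) → K (i + 1) ≤ M)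
    -- `L (i+1) = O^{p'}(K (i+1))`: the smallest normal subgroup of `K (i+1)` with `p'`-quotient
    (hLsucc : ∀ i : ℕ, L (i + 1) ≤ K (i + 1) ∧ normalIn (L (i + 1)) (K (i + 1)) ∧
      ¬ p ∣ ((L (i + 1)).subgroupOf (K (i + 1))).index ∧
      ∀ M : Subgroup G, M ≤ K (i + 1) → normalIn M (K (i + 1)) →
        ¬ p ∣ (M.subgroupOf (K (i + 1))).index → L (i + 1) ≤ M) :
    (∃ j : ℕ, IsPGroup p ↥(L j) ∧ L j ≤ SubG x ∧
      ((L j : Set G) * (SubG x : Set G)) ≠ Set.univ) ∧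
    ∃ k : ℕ, 0 < k ∧ ((L k : Set G) * (SubG x : Set G)) ≠ Set.univ ∧
      ∀ i : ℕ, 0 < i → i < k → ((L i : Set G) * (SubG x : Set G)) = Set.univ :=
  stmt_16_general p hp hsolv x hxsub hxnotsub L K hK hLsucc
end
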